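/- arXiv:1804.10729 — 4 statements merged into one kernel-verified Lean document; each statement's English description precedes it below -/
import Mathlib

section
/- Let Z₁ be a random variable on a finite set 𝒵₁, Z₂ uniformly distributed on a finite set 𝒵₂ independent of Z₁ (i.e., the conditional distribution of Z₂ given Z₁ is uniform), and let Y be a real-valued random variable with conditional densities p_{Y|Z₁,Z₂}. Define for s ∈ [0,1) the quantity E_s(Y; Z) := ∫ ( Σ_z P_Z(z) p_{Y|Z}(y|z)^{1/(1-s)} )^{1-s} dy. Then E_s(Y; (Z₁,Z₂)) ≤ |𝒵₂|^s · E_s(Y; Z₁), where p_{Y|Z₁}(y|z₁) = Σ_{z₂} P_{Z₂|Z₁}(z₂|z₁) p_{Y|Z₁,Z₂}(y|z₁,z₂). -/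
/-!
Pointwise in `y`, with `q = 1/(1-s) ≥ 1` and `N = |𝒵₂|`, superadditivity of `x ↦ x ^ q` gives
`∑ z₂, N⁻¹ x_{z₂} ^ q ≤ N⁻¹ (∑ z₂, x_{z₂}) ^ q = N ^ (q - 1) (∑ z₂, N⁻¹ x_{z₂}) ^ q`,
and raising to the power `1 - s` turns the factor `N ^ (q - 1)` into `N ^ s`.
-/

open MeasureTheory ENNReal Finset

namespace ENNReal

theorem sum_rpow_le_rpow_sum {ι : Type*} (t : Finset ι) (f : ι → ℝ≥0∞) {q : ℝ} (hq : 1 ≤ q) :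
    ∑ i ∈ t, f i ^ q ≤ (∑ i ∈ t, f i) ^ q := by
  classical
  induction t using Finset.induction with
  | empty => simp [zero_rpow_of_pos (zero_lt_one.trans_le hq)]
  | insert i t hi ih =>
    rw [sum_insert hi, sum_insert hi]
    exact (add_le_add_right ih _).trans (add_rpow_le_rpow_add _ _ hq)

theorem sum_inv_mul_rpow_le {ι : Type*} (t : Finset ι) (x : ι → ℝ≥0∞) {c : ℝ≥0∞}
    (hc0 : c ≠ 0) (hc : c ≠ ⊤) {q : ℝ} (hq : 1 ≤ q) :
    ∑ i ∈ t, c⁻¹ * x i ^ q ≤ c ^ (q - 1) * (∑ i ∈ t, c⁻¹ * x i) ^ q := by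
  have hcq : c ^ (q - 1) * c⁻¹ ^ q = c⁻¹ := by
    rw [rpow_sub _ _ hc0 hc, rpow_one, inv_rpow, div_eq_mul_inv, mul_right_comm,
      ENNReal.mul_inv_cancel (rpow_pos (pos_iff_ne_zero.2 hc0) hc).ne'
      (rpow_ne_top_of_nonneg (by linarith) hc), one_mul]
  rw [← mul_sum, ← mul_sum, mul_rpow_of_nonneg _ _ (by linarith), ← mul_assoc, hcq]
  exact mul_le_mul_right (sum_rpow_le_rpow_sum t x hq) _

end ENNReal

theorem stmt2_general {Z₁ Z₂ : Type*} [Fintype Z₁] [Fintype Z₂] [Nonempty Z₂]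
    (P₁ : Z₁ → ℝ≥0∞)
    (p : Z₁ → Z₂ → ℝ → ℝ≥0∞)
    (s : ℝ) (hs0 : 0 ≤ s) (hs1 : s < 1) :
    (∫⁻ y : ℝ, (∑ z₁, ∑ z₂, P₁ z₁ * (Fintype.card Z₂ : ℝ≥0∞)⁻¹ *
        (p z₁ z₂ y) ^ (1 / (1 - s))) ^ (1 - s))
      ≤ (Fintype.card Z₂ : ℝ≥0∞) ^ s *
        ∫⁻ y : ℝ, (∑ z₁, P₁ z₁ *
          (∑ z₂, (Fintype.card Z₂ : ℝ≥0∞)⁻¹ * p z₁ z₂ y) ^ (1 / (1 - s))) ^ (1 - s) := by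
  set N : ℝ≥0∞ := (Fintype.card Z₂ : ℝ≥0∞)
  set q : ℝ := 1 / (1 - s)
  have hs : 0 < 1 - s := by linarith
  have hq : 1 ≤ q := by rw [le_div_iff₀ hs]; linarith
  have hqs : (q - 1) * (1 - s) = s := by
    simp only [q, sub_mul, one_div, inv_mul_cancel₀ hs.ne']; ring
  have hN0 : N ≠ 0 := by simp [N]
  have hN : N ≠ ⊤ := natCast_ne_top _
  rw [← lintegral_const_mul' _ _ (rpow_ne_top_of_nonneg hs0 hN)]
  refine lintegral_mono fun y => ?_
  calc (∑ z₁, ∑ z₂, P₁ z₁ * N⁻¹ * p z₁ z₂ y ^ q) ^ (1 - s)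
      ≤ (N ^ (q - 1) * ∑ z₁, P₁ z₁ * (∑ z₂, N⁻¹ * p z₁ z₂ y) ^ q) ^ (1 - s) := by
        gcongr
        rw [mul_sum]
        gcongr with z₁
        simp_rw [mul_assoc]
        rw [← mul_sum, mul_left_comm]
        gcongr
        exact sum_inv_mul_rpow_le _ _ hN0 hN hq
    _ = N ^ s * (∑ z₁, P₁ z₁ * (∑ z₂, N⁻¹ * p z₁ z₂ y) ^ q) ^ (1 - s) := by
        rw [mul_rpow_of_nonneg _ _ hs.le, ← rpow_mul, hqs]

/-- Lemma LOE: if `Z₂` is uniform on a finite set `𝒵₂` and (conditionally on `Z₁`)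
independent of `Z₁`, then `E_s(Y;(Z₁,Z₂)) ≤ |𝒵₂|^s ⬝ E_s(Y;Z₁)`, where
`E_s(Y;Z) = ∫ (Σ_z P_Z(z) p_{Y|Z}(y|z)^{1/(1-s)})^{1-s} dy`. -/
theorem stmt2 {Z₁ Z₂ : Type*} [Fintype Z₁] [Fintype Z₂] [Nonempty Z₂]
    (P₁ : Z₁ → ℝ≥0∞) (hP₁ : ∑ z₁, P₁ z₁ = 1)
    (p : Z₁ → Z₂ → ℝ → ℝ≥0∞) (hmeas : ∀ z₁ z₂, Measurable (p z₁ z₂))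
    (s : ℝ) (hs0 : 0 ≤ s) (hs1 : s < 1) :
    (∫⁻ y : ℝ, (∑ z₁, ∑ z₂, P₁ z₁ * (Fintype.card Z₂ : ℝ≥0∞)⁻¹ *
        (p z₁ z₂ y) ^ (1 / (1 - s))) ^ (1 - s))
      ≤ (Fintype.card Z₂ : ℝ≥0∞) ^ s *
        ∫⁻ y : ℝ, (∑ z₁, P₁ z₁ *
          (∑ z₂, (Fintype.card Z₂ : ℝ≥0∞)⁻¹ * p z₁ z₂ y) ^ (1 / (1 - s))) ^ (1 - s) :=
  stmt2_general P₁ p s hs0 hs1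
end

section
/- For s ∈ (0,1), finite sets 𝒵₁, 𝒵₂, a probability distribution P on 𝒵₁ × 𝒵₂, and conditional densities p(y|z₁,z₂) ≥ 0 with ∫ p(y|z₁,z₂) dy = 1, the quantity A(s) := Σ_{z₂} P_{Z₂}(z₂) ∫ ( Σ_{z₁} P_{Z₁|Z₂}(z₁|z₂) p(y|z₁,z₂)^{1+s} )^{1/(1+s)} dy satisfies: A(s) is at most the corresponding unconditional quantity B(s) := ∫ ( Σ_{z₁,z₂} P(z₁,z₂) p(y|z₁,z₂)^{1+s} )^{1/(1+s)} dy, i.e., exp((s/(1+s)) I^↓_{1+s}(Y;Z₁|Z₂)) ≤ exp((s/(1+s)) I^↓_{1+s}(Y;Z₁,Z₂)). -/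
open MeasureTheory ENNReal

/-! Proof: pulling each weight `P_{Z₂}(z₂)` inside its integral and the finite sum over `z₂` inside
the integral only increases the left-hand side, and pointwise in `y` the concavity of
`x ↦ x ^ (1/(1+s))` (Jensen's inequality for the weights `P_{Z₂}`) bounds the resulting
`P_{Z₂}`-average of powers by the power of the average, which is the integrand on the right. -/

section

variable {ι : Type*}

theorem ENNReal.sum_mul_rpow_le_rpow_sum_mul (s : Finset ι) (w z : ι → ℝ≥0∞)
    (hw : ∑ i ∈ s, w i = 1) {q : ℝ} (hq0 : 0 < q) (hq1 : q ≤ 1) :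
    ∑ i ∈ s, w i * z i ^ q ≤ (∑ i ∈ s, w i * z i) ^ q := by
  have hq : q * q⁻¹ = 1 := mul_inv_cancel₀ hq0.ne'
  have jensen := ENNReal.rpow_arith_mean_le_arith_mean_rpow s w (fun i => z i ^ q) hw
    (one_le_inv₀ hq0 |>.mpr hq1)
  simp only [← ENNReal.rpow_mul, hq, ENNReal.rpow_one] at jensen
  simpa only [← ENNReal.rpow_mul, inv_mul_cancel₀ hq0.ne', ENNReal.rpow_one]
    using ENNReal.rpow_le_rpow jensen hq0.le

theorem ENNReal.sum_mul_sum_div_sum_mul (s : Finset ι) (a b : ι → ℝ≥0∞)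
    (ha : ∑ i ∈ s, a i ≠ ∞) :
    (∑ i ∈ s, a i) * ∑ i ∈ s, a i / (∑ j ∈ s, a j) * b i = ∑ i ∈ s, a i * b i := by
  rw [Finset.mul_sum]
  refine Finset.sum_congr rfl fun i hi => ?_
  have hle : a i ≤ ∑ j ∈ s, a j := Finset.single_le_sum (fun _ _ => zero_le) hi
  rw [← mul_assoc, ENNReal.mul_div_cancel' (fun h => nonpos_iff_eq_zero.mp (h ▸ hle))
    (fun h => absurd h ha)]

theorem MeasureTheory.sum_lintegral_le_lintegral_sum {α : Type*} [MeasurableSpace α]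
    (μ : Measure α) (s : Finset ι) (f : ι → α → ℝ≥0∞) :
    ∑ i ∈ s, ∫⁻ x, f i x ∂μ ≤ ∫⁻ x, ∑ i ∈ s, f i x ∂μ := by
  classical
  induction s using Finset.induction_on with
  | empty => simp
  | insert i s hi ih =>
    simp only [Finset.sum_insert hi]
    exact (add_le_add_right ih _).trans (le_lintegral_add _ _)

end

theorem stmt3_general {Z₁ Z₂ : Type*} [Fintype Z₁] [Fintype Z₂]
    (s : ℝ) (hs0 : 0 < s)
    (P : Z₁ → Z₂ → ℝ≥0∞) (hP : ∑ z₁, ∑ z₂, P z₁ z₂ = 1)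
    (p : Z₁ → Z₂ → ℝ → ℝ≥0∞) :
    (∑ z₂, (∑ z₁, P z₁ z₂) *
        ∫⁻ y : ℝ, (∑ z₁, (P z₁ z₂ / ∑ z₁', P z₁' z₂) * (p z₁ z₂ y) ^ (1 + s)) ^ (1 / (1 + s)))
      ≤ ∫⁻ y : ℝ, (∑ z₁, ∑ z₂, P z₁ z₂ * (p z₁ z₂ y) ^ (1 + s)) ^ (1 / (1 + s)) := by
  set w : Z₂ → ℝ≥0∞ := fun z₂ => ∑ z₁, P z₁ z₂
  set q : Z₂ → ℝ → ℝ≥0∞ := fun z₂ y => ∑ z₁, (P z₁ z₂ / w z₂) * (p z₁ z₂ y) ^ (1 + s)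
  have hw : ∑ z₂, w z₂ = 1 := Finset.sum_comm.trans hP
  have hw_ne_top (z₂ : Z₂) : w z₂ ≠ ∞ :=
    ne_top_of_le_ne_top one_ne_top (hw ▸ Finset.single_le_sum (fun _ _ => zero_le)
      (Finset.mem_univ z₂))
  calc ∑ z₂, w z₂ * ∫⁻ y, q z₂ y ^ (1 / (1 + s))
      ≤ ∑ z₂, ∫⁻ y, w z₂ * q z₂ y ^ (1 / (1 + s)) :=
        Finset.sum_le_sum fun z₂ _ => lintegral_const_mul_le _ _
    _ ≤ ∫⁻ y, ∑ z₂, w z₂ * q z₂ y ^ (1 / (1 + s)) := sum_lintegral_le_lintegral_sum _ _ _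
    _ ≤ ∫⁻ y, (∑ z₂, w z₂ * q z₂ y) ^ (1 / (1 + s)) :=
        lintegral_mono fun y => ENNReal.sum_mul_rpow_le_rpow_sum_mul _ _ _ hw
          (by positivity) ((div_le_one (by positivity)).mpr (by linarith))
    _ = ∫⁻ y, (∑ z₁, ∑ z₂, P z₁ z₂ * (p z₁ z₂ y) ^ (1 + s)) ^ (1 / (1 + s)) := by
        simp only [q, ENNReal.sum_mul_sum_div_sum_mul _ _ _ (hw_ne_top _), w]
        simp only [Finset.sum_comm (γ := Z₂)]

/-- `exp((s/(1+s)) I^↓_{1+s}(Y;Z₁|Z₂)) ≤ exp((s/(1+s)) I^↓_{1+s}(Y;Z₁,Z₂))`: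
the conditional Gallager-type quantity is bounded by the unconditional one. -/
theorem stmt3 {Z₁ Z₂ : Type*} [Fintype Z₁] [Fintype Z₂]
    (s : ℝ) (hs0 : 0 < s) (hs1 : s < 1)
    (P : Z₁ → Z₂ → ℝ≥0∞) (hP : ∑ z₁, ∑ z₂, P z₁ z₂ = 1)
    (p : Z₁ → Z₂ → ℝ → ℝ≥0∞) (hm : ∀ z₁ z₂, Measurable (p z₁ z₂))
    (hdens : ∀ z₁ z₂, ∫⁻ y : ℝ, p z₁ z₂ y = 1) :
    (∑ z₂, (∑ z₁, P z₁ z₂) *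
        ∫⁻ y : ℝ, (∑ z₁, (P z₁ z₂ / ∑ z₁', P z₁' z₂) * (p z₁ z₂ y) ^ (1 + s)) ^ (1 / (1 + s)))
      ≤ ∫⁻ y : ℝ, (∑ z₁, ∑ z₂, P z₁ z₂ * (p z₁ z₂ y) ^ (1 + s)) ^ (1 / (1 + s)) :=
  stmt3_general s hs0 P hP p
end

section
/- Let Y be a real-valued random variable and Z a random variable on a finite set, with joint distribution given by conditional densities p_{Y|Z}. Define f(s) := (s/(1+s)) I^↓_{1+s}(Y;Z) = log ∫ ( Σ_z P_Z(z) p_{Y|Z}(y|z)^{1+s} )^{1/(1+s)} dy for s > 0. Then lim_{s→0⁺} f(s)/s = I(Y;Z), the (Shannon) mutual information between Y and Z. -/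
/-!
Write `G s y = (∑ z, P z * p z y ^ (1 + s)) ^ (1 / (1 + s))` for the weighted power mean of
`z ↦ p z y`. Then `G 0 = p_Y` integrates to `1`, and the right derivative of `s ↦ G s y` at `0`
is `∑ z, P z * p z y * log (p z y / p_Y y)`, the integrand of `I(Y;Z)`. Monotonicity of power
means and Hölder interpolation between the exponents `1` and `2` give
`0 ≤ (G s y - G 0 y) / s ≤ 2 * (G 1 y - G 0 y)` for `0 < s ≤ 1`, so by dominated convergence
`F s = ∫ G s` has right derivative `I(Y;Z)` at `0`; since `F 0 = 1`, so does `log ∘ F`.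
-/

open MeasureTheory Filter Real Set Topology

noncomputable def powerMean {ι : Type*} [Fintype ι] (w x : ι → ℝ) (r : ℝ) : ℝ :=
  (∑ i, w i * x i ^ r) ^ (1 / r)

section PowerMean

variable {ι : Type*} [Fintype ι] {w x : ι → ℝ}

theorem powerMean_one (w x : ι → ℝ) : powerMean w x 1 = ∑ i, w i * x i := by
  simp [powerMean]

theorem sum_mul_le_powerMean (hw : ∀ i, 0 ≤ w i) (hw₁ : ∑ i, w i = 1) (hx : ∀ i, 0 ≤ x i)
    {r : ℝ} (hr : 1 ≤ r) : ∑ i, w i * x i ≤ powerMean w x r :=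
  arith_mean_le_rpow_mean _ _ _ (fun i _ ↦ hw i) hw₁ (fun i _ ↦ hx i) hr

theorem sum_mul_rpow_one_add_le (hw : ∀ i, 0 ≤ w i) (hx : ∀ i, 0 ≤ x i) {s : ℝ}
    (hs₀ : 0 < s) (hs₁ : s ≤ 1) :
    ∑ i, w i * x i ^ (1 + s) ≤ (∑ i, w i * x i) ^ (1 - s) * (∑ i, w i * x i ^ (2 : ℝ)) ^ s := by
  have h := inner_le_weight_mul_Lp_of_nonneg Finset.univ (one_le_inv₀ hs₀ |>.mpr hs₁)
    (fun i ↦ w i * x i) (fun i ↦ x i ^ s) (fun i ↦ mul_nonneg (hw i) (hx i))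
    (fun i ↦ rpow_nonneg (hx i) s)
  have hpow : ∀ i, w i * x i * x i ^ s = w i * x i ^ (1 + s) := fun i ↦ by
    rw [rpow_add' (hx i) (by linarith), rpow_one, mul_assoc]
  have hsq : ∀ i, w i * x i * (x i ^ s) ^ s⁻¹ = w i * x i ^ (2 : ℝ) := fun i ↦ by
    rw [← rpow_mul (hx i), mul_inv_cancel₀ hs₀.ne', rpow_one, rpow_two, sq, mul_assoc]
  simpa only [hpow, hsq, inv_inv] using h

theorem powerMean_one_add_le (hw : ∀ i, 0 ≤ w i) (hw₁ : ∑ i, w i = 1) (hx : ∀ i, 0 ≤ x i)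
    {s : ℝ} (hs₀ : 0 < s) (hs₁ : s ≤ 1) :
    powerMean w x (1 + s) ≤ ∑ i, w i * x i + 2 * s * (powerMean w x 2 - ∑ i, w i * x i) := by
  set S := ∑ i, w i * x i
  set Q := ∑ i, w i * x i ^ (2 : ℝ)
  -- `θ` solves `1 / (1 + s) = (1 - θ) / 1 + θ / 2`, interpolating between the exponents `1` and `2`.
  set θ := 2 * s / (1 + s)
  have hS : 0 ≤ S := Finset.sum_nonneg fun i _ ↦ mul_nonneg (hw i) (hx i)
  have hQ : 0 ≤ Q := Finset.sum_nonneg fun i _ ↦ mul_nonneg (hw i) (rpow_nonneg (hx i) _)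
  have hA : S ≤ powerMean w x 2 := sum_mul_le_powerMean hw hw₁ hx one_le_two
  have hθ₀ : 0 ≤ θ := by positivity
  have hθ₁ : θ ≤ 1 := (div_le_one (by linarith)).mpr (by linarith)
  have hθs : θ ≤ 2 * s := div_le_self (by linarith) (by linarith)
  have hinterp : powerMean w x (1 + s) ≤ S ^ (1 - θ) * powerMean w x 2 ^ θ := calc
    powerMean w x (1 + s) ≤ (S ^ (1 - s) * Q ^ s) ^ (1 / (1 + s)) :=
      rpow_le_rpow (Finset.sum_nonneg fun i _ ↦ mul_nonneg (hw i) (rpow_nonneg (hx i) _))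
        (sum_mul_rpow_one_add_le hw hx hs₀ hs₁) (by positivity)
    _ = S ^ (1 - θ) * powerMean w x 2 ^ θ := by
      rw [mul_rpow (by positivity) (by positivity), powerMean, ← rpow_mul hS, ← rpow_mul hQ,
        ← rpow_mul hQ]
      congr 2 <;> (simp only [θ]; field_simp)
      ring
  have hamgm : S ^ (1 - θ) * powerMean w x 2 ^ θ ≤ (1 - θ) * S + θ * powerMean w x 2 :=
    geom_mean_le_arith_mean2_weighted (by linarith) hθ₀ hS (hS.trans hA) (by ring)
  nlinarith [mul_le_mul_of_nonneg_right hθs (sub_nonneg.mpr hA)]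

theorem hasDerivAt_rpow_one_add {x : ℝ} (hx : 0 ≤ x) :
    HasDerivAt (fun s : ℝ ↦ x ^ (1 + s)) (x * log x) 0 := by
  rcases hx.eq_or_lt with rfl | hx
  · refine (hasDerivAt_const (0 : ℝ) (0 : ℝ)).congr_of_eventuallyEq ?_ |>.congr_deriv (by simp)
    filter_upwards [eventually_ne_nhds (show (0 : ℝ) ≠ -1 by norm_num)] with s hs
    exact zero_rpow fun h ↦ hs (by linarith)
  · simpa [mul_comm] using ((hasDerivAt_id (0 : ℝ)).const_add 1).const_rpow hx

theorem hasDerivAt_powerMean_one_add (hx : ∀ i, 0 ≤ x i) (hS : 0 < ∑ i, w i * x i) :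
    HasDerivAt (fun s ↦ powerMean w x (1 + s))
      (∑ i, w i * (x i * log (x i)) - (∑ i, w i * x i) * log (∑ i, w i * x i)) 0 := by
  have hsum : HasDerivAt (fun s : ℝ ↦ ∑ i, w i * x i ^ (1 + s)) (∑ i, w i * (x i * log (x i))) 0 :=
    HasDerivAt.fun_sum fun i _ ↦ (hasDerivAt_rpow_one_add (hx i)).const_mul (w i)
  have hexponent : HasDerivAt (fun s : ℝ ↦ 1 / (1 + s)) (-1) 0 := by
    simpa [Pi.inv_def] using ((hasDerivAt_id (0 : ℝ)).const_add 1).inv (by norm_num)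
  refine (hsum.rpow hexponent (by simpa using hS)).congr_deriv ?_
  norm_num
  ring

theorem tendsto_slope_powerMean_one_add (hw : ∀ i, 0 ≤ w i) (hx : ∀ i, 0 ≤ x i) :
    Tendsto (fun s ↦ (powerMean w x (1 + s) - ∑ i, w i * x i) / s) (𝓝[>] 0)
      (𝓝 (∑ i, w i * x i * log (x i / ∑ j, w j * x j))) := by
  set S := ∑ i, w i * x i with hS_def
  rcases (Finset.sum_nonneg fun i _ ↦ mul_nonneg (hw i) (hx i) : 0 ≤ S).eq_or_lt with hS | hS
  · have hwx : ∀ i, w i * x i = 0 := by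
      simpa using (Finset.sum_eq_zero_iff_of_nonneg fun i _ ↦ mul_nonneg (hw i) (hx i)).mp hS.symm
    have hzero : ∀ s : ℝ, 0 < s → powerMean w x (1 + s) = 0 := fun s hs ↦ by
      have hterm : ∀ i, w i * x i ^ (1 + s) = 0 := fun i ↦ by
        rcases mul_eq_zero.mp (hwx i) with h | h <;> simp [h, zero_rpow (by linarith : 1 + s ≠ 0)]
      simp only [powerMean, hterm, Finset.sum_const_zero]
      exact zero_rpow (by positivity)
    simp only [hwx, zero_mul, Finset.sum_const_zero]
    refine tendsto_const_nhds.congr' ?_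
    filter_upwards [self_mem_nhdsWithin] with s hs
    rw [hzero s hs, hS_def, ← hS, sub_zero, zero_div]
  · have hvalue : ∑ i, w i * x i * log (x i / S) = ∑ i, w i * (x i * log (x i)) - S * log S := by
      rw [hS_def, Finset.sum_mul, ← Finset.sum_sub_distrib]
      refine Finset.sum_congr rfl fun i _ ↦ ?_
      rcases (hx i).eq_or_lt with h | h
      · simp [← h]
      · rw [log_div h.ne' hS.ne']
        ring
    rw [hvalue]
    refine ((hasDerivAt_iff_tendsto_slope.mp (hasDerivAt_powerMean_one_add hx hS)).mono_left
      (nhdsWithin_mono _ fun s hs ↦ ne_of_gt hs)).congr fun s ↦ ?_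
    rw [slope_def_field, add_zero, powerMean_one, sub_zero]

end PowerMean

theorem hasDerivWithinAt_integral_powerMean_one_add {α Z : Type*} [MeasurableSpace α]
    {μ : Measure α} [Fintype Z] {P : Z → ℝ} {p : Z → α → ℝ}
    (hP0 : ∀ z, 0 ≤ P z) (hP1 : ∑ z, P z = 1) (hp0 : ∀ z y, 0 ≤ p z y)
    (hpi : ∀ z, Integrable (p z) μ)
    (hint : ∀ s ∈ Ioc (0 : ℝ) 1, Integrable (fun y ↦ powerMean P (fun z ↦ p z y) (1 + s)) μ) :
    HasDerivWithinAt (fun s ↦ ∫ y, powerMean P (fun z ↦ p z y) (1 + s) ∂μ)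
      (∫ y, ∑ z, P z * p z y * log (p z y / ∑ z', P z' * p z' y) ∂μ) (Ioi 0) 0 := by
  set G : ℝ → α → ℝ := fun s y ↦ powerMean P (fun z ↦ p z y) (1 + s)
  set S : α → ℝ := fun y ↦ ∑ z, P z * p z y
  have hS : Integrable S μ := integrable_finsetSum _ fun z _ ↦ (hpi z).const_mul (P z)
  have hIoc : Ioc (0 : ℝ) 1 ∈ 𝓝[>] 0 := Ioc_mem_nhdsGT zero_lt_one
  have hdiff : Tendsto (fun s ↦ ∫ y, (G s y - S y) / s ∂μ) (𝓝[>] 0)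
      (𝓝 (∫ y, ∑ z, P z * p z y * log (p z y / ∑ z', P z' * p z' y) ∂μ)) := by
    refine tendsto_integral_filter_of_dominated_convergence (fun y ↦ 2 * (G 1 y - S y))
      ?_ ?_ (((hint 1 ⟨one_pos, le_rfl⟩).sub hS).const_mul 2)
      (ae_of_all _ fun y ↦ tendsto_slope_powerMean_one_add hP0 fun z ↦ hp0 z y)
    · filter_upwards [hIoc] with s hs
      exact (((hint s hs).sub hS).div_const s).aestronglyMeasurable
    · filter_upwards [hIoc] with s ⟨hs₀, hs₁⟩
      refine ae_of_all _ fun y ↦ ?_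
      have hlow : S y ≤ G s y :=
        sum_mul_le_powerMean hP0 hP1 (fun z ↦ hp0 z y) (by linarith)
      have hup := powerMean_one_add_le hP0 hP1 (fun z ↦ hp0 z y) hs₀ hs₁
      rw [norm_of_nonneg (div_nonneg (sub_nonneg.mpr hlow) hs₀.le), div_le_iff₀ hs₀]
      simp only [G, one_add_one_eq_two]
      linarith
  rw [hasDerivWithinAt_iff_tendsto_slope' self_notMem_Ioi]
  refine hdiff.congr' ?_
  filter_upwards [hIoc] with s hs
  simp only [slope_def_field, add_zero, powerMean_one, sub_zero]
  rw [integral_div, integral_sub (hint s hs) hS]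

theorem stmt4_general {Z : Type*} [Fintype Z]
    (P : Z → ℝ) (hP0 : ∀ z, 0 ≤ P z) (hP1 : ∑ z, P z = 1)
    (p : Z → ℝ → ℝ) (hp0 : ∀ z y, 0 ≤ p z y)
    (hpd : ∀ z, ∫ y : ℝ, p z y = 1)
    (hint : ∀ s ∈ Set.Ioc (0:ℝ) 1,
      Integrable (fun y : ℝ => (∑ z, P z * (p z y) ^ (1 + s)) ^ (1 / (1 + s)))) :
    Tendsto
      (fun s : ℝ =>
        Real.log (∫ y : ℝ, (∑ z, P z * (p z y) ^ (1 + s)) ^ (1 / (1 + s))) / s)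
      (nhdsWithin 0 (Set.Ioi 0))
      (nhds (∫ y : ℝ, ∑ z, P z * p z y * Real.log (p z y / ∑ z', P z' * p z' y))) := by
  have hpi : ∀ z, Integrable (p z) := fun z ↦ .of_integral_ne_zero (by simp [hpd z])
  have hF0 : ∫ y, powerMean P (fun z ↦ p z y) (1 + 0) = 1 := by
    simp only [add_zero, powerMean_one]
    rw [integral_finsetSum _ fun z _ ↦ (hpi z).const_mul (P z)]
    simp [integral_const_mul, hpd, hP1]
  have hlog := (hasDerivWithinAt_integral_powerMean_one_add hP0 hP1 hp0 hpi hint).log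
    (by rw [hF0]; exact one_ne_zero)
  rw [hasDerivWithinAt_iff_tendsto_slope' self_notMem_Ioi, hF0, div_one] at hlog
  refine hlog.congr fun s ↦ ?_
  rw [slope_def_field, hF0, log_one, sub_zero, sub_zero]
  rfl

/-- `lim_{s→0⁺} f(s)/s = I(Y;Z)`, where
`f(s) = log ∫ (Σ_z P_Z(z) p_{Y|Z}(y|z)^{1+s})^{1/(1+s)} dy` and
`I(Y;Z) = ∫ Σ_z P_Z(z) p_{Y|Z}(y|z) log(p_{Y|Z}(y|z)/p_Y(y)) dy`.
Regularity is assumed: densities are nonnegative, measurable, bounded,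
integrate to one, and the relevant integrands are integrable. -/
theorem stmt4 {Z : Type*} [Fintype Z]
    (P : Z → ℝ) (hP0 : ∀ z, 0 ≤ P z) (hP1 : ∑ z, P z = 1)
    (p : Z → ℝ → ℝ) (hp0 : ∀ z y, 0 ≤ p z y) (hpm : ∀ z, Measurable (p z))
    (hpb : ∀ z, ∃ C, ∀ y, p z y ≤ C)
    (hpd : ∀ z, ∫ y : ℝ, p z y = 1)
    (hint : ∀ s ∈ Set.Ioc (0:ℝ) 1,
      Integrable (fun y : ℝ => (∑ z, P z * (p z y) ^ (1 + s)) ^ (1 / (1 + s))))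
    (hMI : Integrable (fun y : ℝ =>
      ∑ z, P z * p z y * Real.log (p z y / ∑ z', P z' * p z' y))) :
    Tendsto
      (fun s : ℝ =>
        Real.log (∫ y : ℝ, (∑ z, P z * (p z y) ^ (1 + s)) ^ (1 / (1 + s))) / s)
      (nhdsWithin 0 (Set.Ioi 0))
      (nhds (∫ y : ℝ, ∑ z, P z * p z y * Real.log (p z y / ∑ z', P z' * p z' y))) :=
  stmt4_general P hP0 hP1 p hp0 hpd hint
end

section
/- For the BPSK Gaussian MAC Y = h(−1)^{X₁} + h(−1)^{X₂} + Z with X₁, X₂ independent uniform on 𝔽₂ and Z ~ N(0,N₀): the difference between the 1st-type rate 2I(Y;X₁+X₂) − log 2 − I(Y;X₁) and the 2nd-type rate 2I(Y;X₁+X₂) − I(Y;X₁,X₂) equals log 2 − ( H((φ_{0,N₀}+φ_{2h,N₀})/2) − H(φ_{h,N₀}) ), and this difference is nonnegative. -/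
noncomputable section

/-- Gaussian density with mean `a` and variance `N`. -/
def gauss (a N y : ℝ) : ℝ :=
  Real.exp (-(y - a) ^ 2 / (2 * N)) / Real.sqrt (2 * Real.pi * N)

/-- Differential entropy `H(p) = -∫ p log p`. -/
def dent (p : ℝ → ℝ) : ℝ := -∫ y : ℝ, p y * Real.log (p y)

/-- BPSK sign map `σ(x) = (-1)^x`. -/
def bsign (b : Bool) : ℝ := if b then -1 else 1

/-- Output density of the BPSK Gaussian MAC with uniform inputs. -/
def bpskPY (h N₀ y : ℝ) : ℝ :=
  (∑ a : Bool, ∑ b : Bool, gauss (h * bsign a + h * bsign b) N₀ y) / 4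

/-- `I(Y;X₁)` for the BPSK Gaussian MAC `Y = h(-1)^{X₁} + h(-1)^{X₂} + Z`. -/
def bpskI1 (h N₀ : ℝ) : ℝ :=
  ∫ y : ℝ, ∑ a : Bool,
    (1 / 2) * ((∑ b : Bool, gauss (h * bsign a + h * bsign b) N₀ y) / 2) *
      Real.log (((∑ b : Bool, gauss (h * bsign a + h * bsign b) N₀ y) / 2) / bpskPY h N₀ y)

/-- `I(Y;X₁,X₂)` for the BPSK Gaussian MAC. -/
def bpskI12 (h N₀ : ℝ) : ℝ :=
  ∫ y : ℝ, ∑ a : Bool, ∑ b : Bool,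
    (1 / 4) * gauss (h * bsign a + h * bsign b) N₀ y *
      Real.log (gauss (h * bsign a + h * bsign b) N₀ y / bpskPY h N₀ y)

/-- Conditional output density given `X₁ + X₂ = u` (in `𝔽₂`, i.e. `xor`). -/
def bpskPS (h N₀ : ℝ) (u : Bool) (y : ℝ) : ℝ :=
  (∑ a : Bool, gauss (h * bsign a + h * bsign (xor a u)) N₀ y) / 2

/-- `I(Y;X₁+X₂)` for the BPSK Gaussian MAC. -/
def bpskIS (h N₀ : ℝ) : ℝ :=
  ∫ y : ℝ, ∑ u : Bool,
    (1 / 2) * bpskPS h N₀ u y * Real.log (bpskPS h N₀ u y / bpskPY h N₀ y)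

namespace S19
open MeasureTheory Real

variable {N : ℝ}


variable {N : ℝ}

lemma sqrtpos (hN : 0 < N) : 0 < Real.sqrt (2 * Real.pi * N) :=
  Real.sqrt_pos.2 (by positivity)

lemma gauss_pos (hN : 0 < N) (a y : ℝ) : 0 < gauss a N y :=
  div_pos (Real.exp_pos _) (sqrtpos hN)

lemma gauss_le (hN : 0 < N) (a y : ℝ) :
    gauss a N y ≤ 1 / Real.sqrt (2 * Real.pi * N) := by
  unfold gauss
  gcongr
  exact Real.exp_le_one_iff.2 (div_nonpos_of_nonpos_of_nonneg (neg_nonpos.2 (sq_nonneg _)) (by positivity))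

lemma gauss_shift (a N y : ℝ) : gauss a N y = gauss 0 N (y - a) := by simp [gauss]

lemma gauss_cont (a N : ℝ) : Continuous (fun y => gauss a N y) := by
  unfold gauss; fun_prop

lemma log_gauss (hN : 0 < N) (a y : ℝ) :
    Real.log (gauss a N y) = -(y - a) ^ 2 / (2 * N) - Real.log (Real.sqrt (2 * Real.pi * N)) := by
  unfold gauss
  rw [Real.log_div (Real.exp_ne_zero _) (ne_of_gt (sqrtpos hN)), Real.log_exp]


lemma int_sq_exp {b : ℝ} (hb : 0 < b) :
    Integrable fun x : ℝ => x ^ 2 * Real.exp (-b * x ^ 2) := by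
  have h := integrable_rpow_mul_exp_neg_mul_sq hb (s := 2) (by norm_num)
  refine h.congr (Filter.Eventually.of_forall fun x => ?_)
  norm_cast

lemma int_shift_sq {b : ℝ} (hb : 0 < b) (k : ℝ) :
    Integrable fun x : ℝ => (x - k) ^ 2 * Real.exp (-b * x ^ 2) := by
  have H := ((int_sq_exp hb).add ((integrable_mul_exp_neg_mul_sq hb).const_mul (-2 * k))).add
    ((integrable_exp_neg_mul_sq hb).const_mul (k ^ 2))
  refine H.congr (Filter.Eventually.of_forall fun x => ?_)
  simp only [Pi.add_apply]
  ring

lemma integrable_gauss (hN : 0 < N) (a : ℝ) : Integrable fun y => gauss a N y := by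
  have hb : (0:ℝ) < (2 * N)⁻¹ := by positivity
  have H := ((integrable_exp_neg_mul_sq hb).comp_sub_right a).const_mul
    (1 / Real.sqrt (2 * Real.pi * N))
  refine H.congr (Filter.Eventually.of_forall fun y => ?_)
  simp only [gauss]
  rw [show -(2 * N)⁻¹ * (y - a) ^ 2 = -(y - a) ^ 2 / (2 * N) by ring]
  ring

lemma integrable_gauss_sq (hN : 0 < N) (a m : ℝ) :
    Integrable fun y => gauss a N y * (y - m) ^ 2 := by
  have hb : (0:ℝ) < (2 * N)⁻¹ := by positivity
  have H := ((int_shift_sq hb (m - a)).comp_sub_right a).const_mul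
    (1 / Real.sqrt (2 * Real.pi * N))
  refine H.congr (Filter.Eventually.of_forall fun y => ?_)
  simp only [gauss]
  rw [show -(2 * N)⁻¹ * (y - a) ^ 2 = -(y - a) ^ 2 / (2 * N) by ring]
  rw [show y - a - (m - a) = y - m by ring]
  ring

lemma integral_gauss (hN : 0 < N) (a : ℝ) : ∫ y : ℝ, gauss a N y = 1 := by
  have hb : (0:ℝ) < (2 * N)⁻¹ := by positivity
  have h1 : ∫ y : ℝ, gauss a N y = ∫ y : ℝ, gauss 0 N (y - a) := by
    simp_rw [← gauss_shift]
  rw [h1, integral_sub_right_eq_self (fun z => gauss 0 N z) a]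
  unfold gauss
  simp_rw [sub_zero, show ∀ y : ℝ, -y ^ 2 / (2 * N) = -(2 * N)⁻¹ * y ^ 2 from fun y => by ring,
    div_eq_mul_inv]
  rw [MeasureTheory.integral_mul_const, integral_gaussian]
  rw [show Real.pi / (2 * N)⁻¹ = 2 * Real.pi * N by field_simp]
  exact mul_inv_cancel₀ (ne_of_gt (sqrtpos hN))


lemma integrable_gauss_log (hN : 0 < N) (a m : ℝ) {c M : ℝ} (hc : 0 < c)
    {q : ℝ → ℝ} (hq : Continuous q) (h1 : ∀ y, c * gauss m N y ≤ q y) (h2 : ∀ y, q y ≤ M) :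
    Integrable fun y => gauss a N y * Real.log (q y) := by
  set s := Real.sqrt (2 * Real.pi * N) with hs
  have hspos := sqrtpos hN
  have hqpos : ∀ y, 0 < q y := fun y =>
    lt_of_lt_of_le (mul_pos hc (gauss_pos hN m y)) (h1 y)
  set C := |Real.log M| + |Real.log c| + |Real.log s| with hC
  have key : ∀ y, |Real.log (q y)| ≤ C + (y - m) ^ 2 / (2 * N) := by
    intro y
    have hup : Real.log (q y) ≤ C + (y - m) ^ 2 / (2 * N) := by
      have : Real.log (q y) ≤ Real.log M := Real.log_le_log (hqpos y) (h2 y)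
      have h3 : Real.log M ≤ |Real.log M| := le_abs_self _
      have h4 : (0:ℝ) ≤ (y - m) ^ 2 / (2 * N) := by positivity
      have h5 : (0:ℝ) ≤ |Real.log c| + |Real.log s| := by positivity
      rw [hC]; linarith
    have hlo : -(C + (y - m) ^ 2 / (2 * N)) ≤ Real.log (q y) := by
      have hg : Real.log (c * gauss m N y) ≤ Real.log (q y) :=
        Real.log_le_log (mul_pos hc (gauss_pos hN m y)) (h1 y)
      rw [Real.log_mul (ne_of_gt hc) (ne_of_gt (gauss_pos hN m y)), log_gauss hN] at hg
      have h3 : -|Real.log c| ≤ Real.log c := neg_abs_le _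
      have h4 : -|Real.log s| ≤ -Real.log s := neg_le_neg (le_abs_self _)
      have h5 : (0:ℝ) ≤ |Real.log M| := abs_nonneg _
      rw [hC]; rw [← hs, neg_div] at hg; linarith
    exact abs_le.2 ⟨by linarith [hlo], hup⟩
  have hbound : Integrable fun y => gauss a N y * C + gauss a N y * (y - m) ^ 2 * (2 * N)⁻¹ :=
    ((integrable_gauss hN a).mul_const C).add ((integrable_gauss_sq hN a m).mul_const (2 * N)⁻¹)
  refine hbound.mono' ?_ (Filter.Eventually.of_forall fun y => ?_)
  · exact ((gauss_cont a N).measurable.mul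
      (Real.measurable_log.comp hq.measurable)).aestronglyMeasurable
  · rw [Real.norm_eq_abs, abs_mul, abs_of_nonneg (gauss_pos hN a y).le]
    calc gauss a N y * |Real.log (q y)| ≤ gauss a N y * (C + (y - m) ^ 2 / (2 * N)) :=
          mul_le_mul_of_nonneg_left (key y) (gauss_pos hN a y).le
      _ = gauss a N y * C + gauss a N y * (y - m) ^ 2 * (2 * N)⁻¹ := by ring


section Main

variable (h N₀ : ℝ) (hN : 0 < N₀)

open MeasureTheory Real

/-- abbreviations -/
def mixf (h N₀ : ℝ) : ℝ → ℝ := fun y => (gauss 0 N₀ y + gauss (2 * h) N₀ y) / 2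
def mixf' (h N₀ : ℝ) : ℝ → ℝ := fun y => (gauss (-(2 * h)) N₀ y + gauss 0 N₀ y) / 2

lemma PY_eq (y : ℝ) : bpskPY h N₀ y =
    (gauss (-(2 * h)) N₀ y + gauss 0 N₀ y + gauss 0 N₀ y + gauss (2 * h) N₀ y) / 4 := by
  simp only [bpskPY, Fintype.sum_bool, bsign]
  norm_num
  rw [show -h + -h = -(2 * h) by ring, show h + h = 2 * h by ring]
  ring


lemma PY_pos (hN : 0 < N₀) (y : ℝ) : 0 < bpskPY h N₀ y := by
  rw [PY_eq]
  have := gauss_pos hN (-(2*h)) y; have := gauss_pos hN 0 y; have := gauss_pos hN (2*h) y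
  linarith

lemma PY_lb (hN : 0 < N₀) (y : ℝ) : (1/4) * gauss (2*h) N₀ y ≤ bpskPY h N₀ y := by
  rw [PY_eq]
  have := gauss_pos hN (-(2*h)) y; have := gauss_pos hN 0 y
  linarith

lemma PY_ub (hN : 0 < N₀) (y : ℝ) : bpskPY h N₀ y ≤ 1 / Real.sqrt (2 * Real.pi * N₀) := by
  rw [PY_eq]
  have h1 := gauss_le hN (-(2*h)) y; have h2 := gauss_le hN 0 y; have h3 := gauss_le hN (2*h) y
  linarith

lemma PY_cont : Continuous (bpskPY h N₀) := by
  have : bpskPY h N₀ = fun y =>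
      (gauss (-(2 * h)) N₀ y + gauss 0 N₀ y + gauss 0 N₀ y + gauss (2 * h) N₀ y) / 4 :=
    funext (PY_eq h N₀)
  rw [this]
  exact ((((gauss_cont _ _).add (gauss_cont _ _)).add (gauss_cont _ _)).add
    (gauss_cont _ _)).div_const 4

lemma mixf_pos (hN : 0 < N₀) (y : ℝ) : 0 < mixf h N₀ y := by
  have := gauss_pos hN 0 y; have := gauss_pos hN (2*h) y
  unfold mixf; positivity

lemma mixf'_pos (hN : 0 < N₀) (y : ℝ) : 0 < mixf' h N₀ y := by
  have := gauss_pos hN 0 y; have := gauss_pos hN (-(2*h)) y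
  unfold mixf'; positivity

lemma mixf_lb (hN : 0 < N₀) (y : ℝ) : (1/2) * gauss 0 N₀ y ≤ mixf h N₀ y := by
  have := gauss_pos hN (2*h) y
  unfold mixf; linarith

lemma mixf'_lb (hN : 0 < N₀) (y : ℝ) : (1/2) * gauss 0 N₀ y ≤ mixf' h N₀ y := by
  have := gauss_pos hN (-(2*h)) y
  unfold mixf'; linarith

lemma mixf_ub (hN : 0 < N₀) (y : ℝ) : mixf h N₀ y ≤ 1 / Real.sqrt (2 * Real.pi * N₀) := by
  have h1 := gauss_le hN 0 y; have h2 := gauss_le hN (2*h) y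
  unfold mixf; linarith

lemma mixf'_ub (hN : 0 < N₀) (y : ℝ) : mixf' h N₀ y ≤ 1 / Real.sqrt (2 * Real.pi * N₀) := by
  have h1 := gauss_le hN 0 y; have h2 := gauss_le hN (-(2*h)) y
  unfold mixf'; linarith

lemma mixf_cont : Continuous (mixf h N₀) :=
  ((gauss_cont _ _).add (gauss_cont _ _)).div_const 2

lemma mixf'_cont : Continuous (mixf' h N₀) :=
  ((gauss_cont _ _).add (gauss_cont _ _)).div_const 2

lemma intT (hN : 0 < N₀) (m : ℝ) : Integrable fun y => gauss m N₀ y * Real.log (gauss m N₀ y) :=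
  integrable_gauss_log hN m m one_pos (gauss_cont m N₀)
    (fun y => by rw [one_mul]) (fun y => gauss_le hN m y)

lemma Tval (hN : 0 < N₀) (m : ℝ) : ∫ y : ℝ, gauss m N₀ y * Real.log (gauss m N₀ y)
    = ∫ y : ℝ, gauss 0 N₀ y * Real.log (gauss 0 N₀ y) := by
  have : (fun y => gauss m N₀ y * Real.log (gauss m N₀ y))
      = fun y => (fun z => gauss 0 N₀ z * Real.log (gauss 0 N₀ z)) (y - m) := by
    funext y; simp only [← gauss_shift]
  rw [this, integral_sub_right_eq_self (fun z => gauss 0 N₀ z * Real.log (gauss 0 N₀ z)) m]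

lemma intGlogPY (hN : 0 < N₀) (a : ℝ) : Integrable fun y => gauss a N₀ y * Real.log (bpskPY h N₀ y) :=
  integrable_gauss_log hN a (2*h) (by norm_num : (0:ℝ) < 1/4) (PY_cont h N₀)
    (PY_lb h N₀ hN) (PY_ub h N₀ hN)

lemma intPYlog (hN : 0 < N₀) : Integrable fun y => bpskPY h N₀ y * Real.log (bpskPY h N₀ y) := by
  have H := (((((intGlogPY h N₀ hN (-(2*h))).add (intGlogPY h N₀ hN 0)).add
    (intGlogPY h N₀ hN 0)).add (intGlogPY h N₀ hN (2*h))).const_mul (1/4))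
  refine H.congr (Filter.Eventually.of_forall fun y => ?_)
  simp only [Pi.add_apply]
  rw [PY_eq]
  ring

lemma intGlogmix (hN : 0 < N₀) (a : ℝ) : Integrable fun y => gauss a N₀ y * Real.log (mixf h N₀ y) :=
  integrable_gauss_log hN a 0 (by norm_num : (0:ℝ) < 1/2) (mixf_cont h N₀)
    (mixf_lb h N₀ hN) (mixf_ub h N₀ hN)

lemma intGlogmix' (hN : 0 < N₀) (a : ℝ) : Integrable fun y => gauss a N₀ y * Real.log (mixf' h N₀ y) :=
  integrable_gauss_log hN a 0 (by norm_num : (0:ℝ) < 1/2) (mixf'_cont h N₀)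
    (mixf'_lb h N₀ hN) (mixf'_ub h N₀ hN)

lemma intmixlog (hN : 0 < N₀) : Integrable fun y => mixf h N₀ y * Real.log (mixf h N₀ y) := by
  have H := ((intGlogmix h N₀ hN 0).add (intGlogmix h N₀ hN (2*h))).const_mul (1/2)
  refine H.congr (Filter.Eventually.of_forall fun y => ?_)
  simp only [Pi.add_apply]
  unfold mixf
  ring

lemma intmixlog' (hN : 0 < N₀) : Integrable fun y => mixf' h N₀ y * Real.log (mixf' h N₀ y) := by
  have H := ((intGlogmix' h N₀ hN (-(2*h))).add (intGlogmix' h N₀ hN 0)).const_mul (1/2)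
  refine H.congr (Filter.Eventually.of_forall fun y => ?_)
  simp only [Pi.add_apply]
  unfold mixf'
  ring

lemma mix'_shift (y : ℝ) : mixf' h N₀ y = mixf h N₀ (y - -(2*h)) := by
  unfold mixf mixf' gauss
  rw [show y - -(2*h) - 0 = y - -(2*h) by ring, show y - -(2*h) - 2*h = y - 0 by ring]

lemma Bshift : ∫ y : ℝ, mixf' h N₀ y * Real.log (mixf' h N₀ y)
    = ∫ y : ℝ, mixf h N₀ y * Real.log (mixf h N₀ y) := by
  have : (fun y => mixf' h N₀ y * Real.log (mixf' h N₀ y))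
      = fun y => (fun z => mixf h N₀ z * Real.log (mixf h N₀ z)) (y - -(2*h)) := by
    funext y; rw [mix'_shift h N₀]
  rw [this, integral_sub_right_eq_self (fun z => mixf h N₀ z * Real.log (mixf h N₀ z)) (-(2*h))]


lemma I12_pt (hN : 0 < N₀) (y : ℝ) :
    (∑ a : Bool, ∑ b : Bool, (1 / 4) * gauss (h * bsign a + h * bsign b) N₀ y *
      Real.log (gauss (h * bsign a + h * bsign b) N₀ y / bpskPY h N₀ y))
    = (1/4) * (gauss (-(2*h)) N₀ y * Real.log (gauss (-(2*h)) N₀ y))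
      + (1/2) * (gauss 0 N₀ y * Real.log (gauss 0 N₀ y))
      + (1/4) * (gauss (2*h) N₀ y * Real.log (gauss (2*h) N₀ y))
      - bpskPY h N₀ y * Real.log (bpskPY h N₀ y) := by
  have hPY : bpskPY h N₀ y ≠ 0 := (PY_pos h N₀ hN y).ne'
  simp only [Fintype.sum_bool, bsign]
  norm_num
  rw [show -h + -h = -(2*h) by ring, show h + h = 2*h by ring]
  rw [Real.log_div (gauss_pos hN (-(2*h)) y).ne' hPY, Real.log_div (gauss_pos hN 0 y).ne' hPY,
    Real.log_div (gauss_pos hN (2*h) y).ne' hPY]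
  rw [PY_eq]
  ring


lemma I1_pt (hN : 0 < N₀) (y : ℝ) :
    (∑ a : Bool, (1 / 2) * ((∑ b : Bool, gauss (h * bsign a + h * bsign b) N₀ y) / 2) *
      Real.log (((∑ b : Bool, gauss (h * bsign a + h * bsign b) N₀ y) / 2) / bpskPY h N₀ y))
    = (1/2) * (mixf h N₀ y * Real.log (mixf h N₀ y))
      + (1/2) * (mixf' h N₀ y * Real.log (mixf' h N₀ y))
      - bpskPY h N₀ y * Real.log (bpskPY h N₀ y) := by
  have hPY : bpskPY h N₀ y ≠ 0 := (PY_pos h N₀ hN y).ne'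
  simp only [Fintype.sum_bool, bsign]
  norm_num
  rw [show -h + -h = -(2*h) by ring, show h + h = 2*h by ring]
  have e1 : (gauss (-(2*h)) N₀ y + gauss 0 N₀ y) / 2 = mixf' h N₀ y := rfl
  have e2 : (gauss 0 N₀ y + gauss (2*h) N₀ y) / 2 = mixf h N₀ y := rfl
  rw [e1, e2]
  rw [Real.log_div (mixf'_pos h N₀ hN y).ne' hPY, Real.log_div (mixf_pos h N₀ hN y).ne' hPY]
  rw [PY_eq]
  unfold mixf mixf'
  ring

lemma I12_eq (hN : 0 < N₀) : bpskI12 h N₀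
    = (∫ y : ℝ, gauss 0 N₀ y * Real.log (gauss 0 N₀ y))
      - ∫ y : ℝ, bpskPY h N₀ y * Real.log (bpskPY h N₀ y) := by
  have i1 : Integrable fun y => (1/4) * (gauss (-(2*h)) N₀ y * Real.log (gauss (-(2*h)) N₀ y)) :=
    (intT N₀ hN (-(2*h))).const_mul _
  have i2 : Integrable fun y => (1/2) * (gauss 0 N₀ y * Real.log (gauss 0 N₀ y)) :=
    (intT N₀ hN 0).const_mul _
  have i3 : Integrable fun y => (1/4) * (gauss (2*h) N₀ y * Real.log (gauss (2*h) N₀ y)) :=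
    (intT N₀ hN (2*h)).const_mul _
  unfold bpskI12
  rw [show (fun y => ∑ a : Bool, ∑ b : Bool, (1 / 4) * gauss (h * bsign a + h * bsign b) N₀ y *
      Real.log (gauss (h * bsign a + h * bsign b) N₀ y / bpskPY h N₀ y))
    = fun y => (1/4) * (gauss (-(2*h)) N₀ y * Real.log (gauss (-(2*h)) N₀ y))
      + (1/2) * (gauss 0 N₀ y * Real.log (gauss 0 N₀ y))
      + (1/4) * (gauss (2*h) N₀ y * Real.log (gauss (2*h) N₀ y))
      - bpskPY h N₀ y * Real.log (bpskPY h N₀ y) from funext (I12_pt h N₀ hN)]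
  have iAB : Integrable fun y => (1/4) * (gauss (-(2*h)) N₀ y * Real.log (gauss (-(2*h)) N₀ y))
      + (1/2) * (gauss 0 N₀ y * Real.log (gauss 0 N₀ y)) := i1.add i2
  have iS : Integrable fun y => (1/4) * (gauss (-(2*h)) N₀ y * Real.log (gauss (-(2*h)) N₀ y))
      + (1/2) * (gauss 0 N₀ y * Real.log (gauss 0 N₀ y))
      + (1/4) * (gauss (2*h) N₀ y * Real.log (gauss (2*h) N₀ y)) := iAB.add i3
  rw [integral_sub iS (intPYlog h N₀ hN), integral_add iAB i3,
    integral_add i1 i2, integral_const_mul, integral_const_mul, integral_const_mul,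
    Tval N₀ hN (-(2*h)), Tval N₀ hN (2*h)]
  ring

lemma I1_eq (hN : 0 < N₀) : bpskI1 h N₀
    = (∫ y : ℝ, mixf h N₀ y * Real.log (mixf h N₀ y))
      - ∫ y : ℝ, bpskPY h N₀ y * Real.log (bpskPY h N₀ y) := by
  have i1 : Integrable fun y => (1/2) * (mixf h N₀ y * Real.log (mixf h N₀ y)) :=
    (intmixlog h N₀ hN).const_mul _
  have i2 : Integrable fun y => (1/2) * (mixf' h N₀ y * Real.log (mixf' h N₀ y)) :=
    (intmixlog' h N₀ hN).const_mul _
  unfold bpskI1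
  rw [show (fun y => ∑ a : Bool, (1 / 2) * ((∑ b : Bool, gauss (h * bsign a + h * bsign b) N₀ y) / 2) *
      Real.log (((∑ b : Bool, gauss (h * bsign a + h * bsign b) N₀ y) / 2) / bpskPY h N₀ y))
    = fun y => (1/2) * (mixf h N₀ y * Real.log (mixf h N₀ y))
      + (1/2) * (mixf' h N₀ y * Real.log (mixf' h N₀ y))
      - bpskPY h N₀ y * Real.log (bpskPY h N₀ y) from funext (I1_pt h N₀ hN)]
  have iS : Integrable fun y => (1/2) * (mixf h N₀ y * Real.log (mixf h N₀ y))
      + (1/2) * (mixf' h N₀ y * Real.log (mixf' h N₀ y)) := i1.add i2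
  rw [integral_sub iS (intPYlog h N₀ hN), integral_add i1 i2,
    integral_const_mul, integral_const_mul, Bshift h N₀]
  ring

lemma Kbound (hN : 0 < N₀) :
    (∫ y : ℝ, gauss 0 N₀ y * Real.log (gauss 0 N₀ y)) - Real.log 2
      ≤ ∫ y : ℝ, mixf h N₀ y * Real.log (mixf h N₀ y) := by
  have i1 : Integrable fun y =>
      (1/2) * (gauss 0 N₀ y * (Real.log (gauss 0 N₀ y) - Real.log 2)) :=
    (((intT N₀ hN 0).sub ((integrable_gauss hN 0).mul_const (Real.log 2))).const_mul
      (1/2)).congr (Filter.Eventually.of_forall fun y => by simp only [Pi.sub_apply]; ring)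
  have i2 : Integrable fun y =>
      (1/2) * (gauss (2*h) N₀ y * (Real.log (gauss (2*h) N₀ y) - Real.log 2)) :=
    (((intT N₀ hN (2*h)).sub ((integrable_gauss hN (2*h)).mul_const (Real.log 2))).const_mul
      (1/2)).congr (Filter.Eventually.of_forall fun y => by simp only [Pi.sub_apply]; ring)
  have hle : ∀ y : ℝ,
      (1/2) * (gauss 0 N₀ y * (Real.log (gauss 0 N₀ y) - Real.log 2))
        + (1/2) * (gauss (2*h) N₀ y * (Real.log (gauss (2*h) N₀ y) - Real.log 2))
      ≤ mixf h N₀ y * Real.log (mixf h N₀ y) := by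
    intro y
    have hm := mixf_pos h N₀ hN y
    have hg0 := gauss_pos hN 0 y
    have hg2 := gauss_pos hN (2*h) y
    have l0 : Real.log (gauss 0 N₀ y) - Real.log 2 ≤ Real.log (mixf h N₀ y) := by
      rw [← Real.log_div hg0.ne' two_ne_zero]
      refine Real.log_le_log (by positivity) ?_
      have := mixf_lb h N₀ hN y; linarith
    have l2 : Real.log (gauss (2*h) N₀ y) - Real.log 2 ≤ Real.log (mixf h N₀ y) := by
      rw [← Real.log_div hg2.ne' two_ne_zero]
      refine Real.log_le_log (by positivity) ?_
      have := gauss_pos hN 0 y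
      unfold mixf; linarith
    have b0 : (1/2) * (gauss 0 N₀ y * (Real.log (gauss 0 N₀ y) - Real.log 2))
        ≤ (1/2) * (gauss 0 N₀ y * Real.log (mixf h N₀ y)) := by
      have := mul_le_mul_of_nonneg_left l0 hg0.le
      linarith
    have b2 : (1/2) * (gauss (2*h) N₀ y * (Real.log (gauss (2*h) N₀ y) - Real.log 2))
        ≤ (1/2) * (gauss (2*h) N₀ y * Real.log (mixf h N₀ y)) := by
      have := mul_le_mul_of_nonneg_left l2 hg2.le
      linarith
    have : (1/2) * (gauss 0 N₀ y * Real.log (mixf h N₀ y))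
        + (1/2) * (gauss (2*h) N₀ y * Real.log (mixf h N₀ y))
        = mixf h N₀ y * Real.log (mixf h N₀ y) := by
      unfold mixf; ring
    linarith
  have iS : Integrable fun y =>
      (1/2) * (gauss 0 N₀ y * (Real.log (gauss 0 N₀ y) - Real.log 2))
        + (1/2) * (gauss (2*h) N₀ y * (Real.log (gauss (2*h) N₀ y) - Real.log 2)) := i1.add i2
  have hmono := integral_mono iS (intmixlog h N₀ hN) hle
  have e0 : ∫ a : ℝ, gauss 0 N₀ a * (Real.log (gauss 0 N₀ a) - Real.log 2)
      = (∫ a : ℝ, gauss 0 N₀ a * Real.log (gauss 0 N₀ a)) - Real.log 2 := by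
    rw [show (fun a : ℝ => gauss 0 N₀ a * (Real.log (gauss 0 N₀ a) - Real.log 2))
        = fun a : ℝ => gauss 0 N₀ a * Real.log (gauss 0 N₀ a) - gauss 0 N₀ a * Real.log 2
      from funext fun a => by ring]
    rw [integral_sub (intT N₀ hN 0) ((integrable_gauss hN 0).mul_const _),
      integral_mul_const, integral_gauss hN 0, one_mul]
  have e2 : ∫ a : ℝ, gauss (2*h) N₀ a * (Real.log (gauss (2*h) N₀ a) - Real.log 2)
      = (∫ a : ℝ, gauss 0 N₀ a * Real.log (gauss 0 N₀ a)) - Real.log 2 := by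
    rw [show (fun a : ℝ => gauss (2*h) N₀ a * (Real.log (gauss (2*h) N₀ a) - Real.log 2))
        = fun a : ℝ => gauss (2*h) N₀ a * Real.log (gauss (2*h) N₀ a) - gauss (2*h) N₀ a * Real.log 2
      from funext fun a => by ring]
    rw [integral_sub (intT N₀ hN (2*h)) ((integrable_gauss hN (2*h)).mul_const _),
      integral_mul_const, integral_gauss hN (2*h), one_mul, Tval N₀ hN (2*h)]
  rw [integral_add i1 i2, integral_const_mul, integral_const_mul, e0, e2] at hmono
  linarith

end Main

end S19

/-- The difference between the 1st-type rate `2I(Y;X₁+X₂) − log 2 − I(Y;X₁)` and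
the 2nd-type rate `2I(Y;X₁+X₂) − I(Y;X₁,X₂)` equals
`log 2 − (H((φ₀+φ_{2h})/2) − H(φ_h))`, and it is nonnegative. -/
theorem stmt19 (h N₀ : ℝ) (hN : 0 < N₀) :
    (2 * bpskIS h N₀ - bpskI12 h N₀) -
        (2 * bpskIS h N₀ - Real.log 2 - bpskI1 h N₀)
      = Real.log 2 -
        (dent (fun y => (gauss 0 N₀ y + gauss (2 * h) N₀ y) / 2) - dent (gauss h N₀)) ∧
      0 ≤ Real.log 2 -
        (dent (fun y => (gauss 0 N₀ y + gauss (2 * h) N₀ y) / 2) - dent (gauss h N₀)) := by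
  have e12 := S19.I12_eq h N₀ hN
  have e1 := S19.I1_eq h N₀ hN
  have kb := S19.Kbound h N₀ hN
  have hd : dent (gauss h N₀) = -∫ y : ℝ, gauss 0 N₀ y * Real.log (gauss 0 N₀ y) := by
    unfold dent
    rw [S19.Tval N₀ hN h]
  have hm : dent (fun y => (gauss 0 N₀ y + gauss (2 * h) N₀ y) / 2)
      = -∫ y : ℝ, S19.mixf h N₀ y * Real.log (S19.mixf h N₀ y) := rfl
  constructor
  · rw [e12, e1, hd, hm]
    ring
  · rw [hd, hm]
    linarith

end
end
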